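/- arXiv:2012.00851 — 4 statements merged into one kernel-verified Lean document; each statement's English description precedes it below -/
import Mathlib

section
/- Let G be a finite, connected, non-bipartite undirected graph without loops on vertex set V. Then there is no independent set I of G such that E(E(I)) = I, where E(A) denotes the set of vertices adjacent to at least one vertex of A. -/
open Finset

/-- A finset of vertices is independent: no two of its members are adjacent. -/
def IsIndep {V : Type*} (G : SimpleGraph V) (I : Finset V) : Prop :=
  ∀ i ∈ I, ∀ j ∈ I, ¬ G.Adj i j

/-- The set of neighbors of at least one vertex of `A`. -/
def nbhd {V : Type*} [Fintype V] [DecidableEq V] (G : SimpleGraph V) [DecidableRel G.Adj]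
    (A : Finset V) : Finset V :=
  A.biUnion fun i => G.neighborFinset i

/-! If `E(E(I)) ⊆ I` for an independent set `I`, then `E(I)` is independent too, and `I ∪ E(I)`
is closed under adjacency, so it is all of `V` when `G` is connected and `I ≠ ∅`. Colouring `I`
with one colour and the rest with the other is then a proper 2-colouring. -/

theorem SimpleGraph.Reachable.mem_of_adj_closed {V : Type*} {G : SimpleGraph V} {S : Set V}
    (hS : ∀ ⦃a b⦄, G.Adj a b → a ∈ S → b ∈ S) {u v : V} (huv : G.Reachable u v) (hu : u ∈ S) :
    v ∈ S := by
  obtain ⟨w⟩ := huv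
  induction w with
  | nil => exact hu
  | cons hadj _ ih => exact ih (hS hadj hu)

theorem SimpleGraph.colorable_two_of_isIndep {V : Type*} (G : SimpleGraph V) {s t : Finset V}
    (hs : IsIndep G s) (ht : IsIndep G t) (hcover : ∀ v, v ∈ s ∨ v ∈ t) : G.Colorable 2 := by
  classical
  refine ⟨.mk (fun v => if v ∈ s then 0 else 1) fun {u v} huv hc => ?_⟩
  by_cases hu : u ∈ s
  · have hv : v ∈ s := by by_contra hv; simp [hu, hv] at hc
    exact hs u hu v hv huv
  · have hv : v ∉ s := fun hv => by simp [hu, hv] at hc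
    exact ht u ((hcover u).resolve_left hu) v ((hcover v).resolve_left hv) huv

section nbhd

variable {V : Type*} [Fintype V] [DecidableEq V] {G : SimpleGraph V} [DecidableRel G.Adj]
  {I : Finset V}

theorem mem_nbhd {A : Finset V} {v : V} : v ∈ nbhd G A ↔ ∃ i ∈ A, G.Adj i v := by
  simp [nbhd, SimpleGraph.adj_comm]

theorem IsIndep.nbhd_of_nbhd_nbhd_subset (hI : IsIndep G I) (hEE : nbhd G (nbhd G I) ⊆ I) :
    IsIndep G (nbhd G I) := fun u hu v hv huv =>
  hI u (hEE (mem_nbhd.2 ⟨v, hv, huv.symm⟩)) v (hEE (mem_nbhd.2 ⟨u, hu, huv⟩)) huv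

theorem mem_or_mem_nbhd_of_adj (hEE : nbhd G (nbhd G I) ⊆ I) {a b : V} (hab : G.Adj a b) :
    a ∈ I ∨ a ∈ nbhd G I → b ∈ I ∨ b ∈ nbhd G I
  | .inl ha => .inr (mem_nbhd.2 ⟨a, ha, hab⟩)
  | .inr ha => .inl (hEE (mem_nbhd.2 ⟨a, ha, hab⟩))

theorem SimpleGraph.Connected.mem_or_mem_nbhd (hconn : G.Connected)
    (hEE : nbhd G (nbhd G I) ⊆ I) (hI : I.Nonempty) (v : V) : v ∈ I ∨ v ∈ nbhd G I :=
  have ⟨i, hi⟩ := hI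
  (hconn i v).mem_of_adj_closed (S := {v | v ∈ I ∨ v ∈ nbhd G I})
    (fun _ _ hab => mem_or_mem_nbhd_of_adj hEE hab) (.inl hi)

end nbhd

/-- In a finite connected non-bipartite graph, there is no (nonempty) independent set `I`
with `E(E(I)) = I`. -/
theorem stmt0 {V : Type*} [Fintype V] [DecidableEq V] (G : SimpleGraph V) [DecidableRel G.Adj]
    (hconn : G.Connected) (hnb : ¬ G.Colorable 2) :
    ¬ ∃ I : Finset V, I.Nonempty ∧ IsIndep G I ∧ nbhd G (nbhd G I) = I := by
  rintro ⟨I, hne, hI, hEE⟩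
  exact hnb <| G.colorable_two_of_isIndep hI (hI.nbhd_of_nbhd_nbhd_subset hEE.le)
    (hconn.mem_or_mem_nbhd hEE.le hne)
end

section
/- Let G be the cycle graph on N = 2K+1 vertices (K ≥ 1). Then every nonempty independent set I of G satisfies |E(I)| ≥ |I| + 1, where E(I) denotes the set of neighbors of vertices of I. -/
/-!
The neighbourhood of `I` in the cycle on `ZMod N` is `(I + 1) ∪ (I - 1)`, and `I + 1` already has
`|I|` elements. If `I - 1 ⊆ I + 1`, then `I` is closed under `x ↦ x - 2`; for odd `N` the shift by
`2` generates `ZMod N`, so `I` would be everything, which is not independent. Hence some element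
of `I - 1` lies outside `I + 1`.
-/

open Finset

/-- The cycle graph on `ZMod N`: `i` adjacent to `i ± 1`. -/
def cycleGraph (N : ℕ) : SimpleGraph (ZMod N) where
  Adj i j := i ≠ j ∧ (i + 1 = j ∨ j + 1 = i)
  symm := by
    refine ⟨?_⟩
    rintro i j ⟨h1, h2⟩
    exact ⟨h1.symm, h2.symm⟩
  loopless := ⟨by rintro i ⟨h1, _⟩; exact h1 rfl⟩

namespace ZMod

variable {N : ℕ}

theorem isUnit_two_of_odd (hodd : Odd N) : IsUnit (2 : ZMod N) := by
  exact_mod_cast (isUnit_iff_coprime 2 N).2 (Nat.coprime_two_left.2 hodd)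

variable [NeZero N]

theorem eq_univ_of_image_add_subset {a : ZMod N} (ha : IsUnit a) {s : Finset (ZMod N)}
    (hs : s.Nonempty) (hshift : s.image (· + a) ⊆ s) : s = univ := by
  obtain ⟨x, hx⟩ := hs
  have hmul : ∀ n : ℕ, x + n * a ∈ s := by
    intro n
    induction n with
    | zero => simpa using hx
    | succ n ih => simpa [add_mul, add_assoc] using hshift (mem_image_of_mem (· + a) ih)
  refine eq_univ_of_forall fun y => ?_
  obtain ⟨u, rfl⟩ := ha
  simpa using hmul ((y - x) * ↑u⁻¹).val

end ZMod

section CycleGraph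

variable {N : ℕ} [Nontrivial (ZMod N)]

theorem cycleGraph_adj_iff {i j : ZMod N} :
    (cycleGraph N).Adj i j ↔ j = i + 1 ∨ j = i - 1 := by
  simp only [cycleGraph]
  constructor
  · rintro ⟨-, h | h⟩
    · exact .inl h.symm
    · exact .inr (by rw [← h]; ring)
  · rintro (rfl | rfl)
    · exact ⟨by simp, .inl rfl⟩
    · exact ⟨fun h => one_ne_zero (by linear_combination h), .inr (by ring)⟩

variable [NeZero N] [DecidableRel (cycleGraph N).Adj]

theorem nbhd_cycleGraph (I : Finset (ZMod N)) :
    nbhd (cycleGraph N) I = I.image (· + 1) ∪ I.image (· - 1) := by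
  ext x
  simp only [nbhd, mem_biUnion, SimpleGraph.mem_neighborFinset, cycleGraph_adj_iff, mem_union,
    mem_image]
  grind

theorem card_add_one_le_card_nbhd_cycleGraph (hodd : Odd N) {I : Finset (ZMod N)}
    (hne : I.Nonempty) (hind : IsIndep (cycleGraph N) I) :
    I.card + 1 ≤ (nbhd (cycleGraph N) I).card := by
  have hne_univ : I ≠ univ := by
    obtain ⟨i, hi⟩ := hne
    intro h
    exact hind i hi (i + 1) (h ▸ mem_univ _) (cycleGraph_adj_iff.2 (.inl rfl))
  have hnot : ¬ I.image (· - 1) ⊆ I.image (· + 1) := by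
    intro hsub
    refine hne_univ (ZMod.eq_univ_of_image_add_subset (a := -2) ?_ hne ?_)
    · exact (ZMod.isUnit_two_of_odd hodd).neg
    · intro x hx
      obtain ⟨i, hi, rfl⟩ := mem_image.1 hx
      obtain ⟨j, hj, hji⟩ := mem_image.1 (hsub (mem_image_of_mem (· - 1) hi))
      convert hj using 1
      linear_combination -hji
  rw [nbhd_cycleGraph, ← card_image_of_injective I (add_left_injective 1)]
  exact card_lt_card (left_lt_sup.2 hnot)

end CycleGraph

/-- In an odd cycle `C_{2K+1}`, every nonempty independent set `I` satisfies
`|E(I)| ≥ |I| + 1`. -/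
theorem stmt2 (K : ℕ) (hK : 1 ≤ K)
    [DecidableRel (cycleGraph (2 * K + 1)).Adj]
    (I : Finset (ZMod (2 * K + 1))) (hne : I.Nonempty)
    (hind : IsIndep (cycleGraph (2 * K + 1)) I) :
    I.card + 1 ≤ (nbhd (cycleGraph (2 * K + 1)) I).card := by
  have : Fact (1 < 2 * K + 1) := ⟨by omega⟩
  exact card_add_one_le_card_nbhd_cycleGraph (odd_two_mul_add_one K) hne hind
end

section
/- Let G = (V, E) be a simple graph, α : V → ℝ_{>0}, and define the unnormalized measure ψ(c) = Π_{p=1}^n α_{c_p} / α(E(V(c_1, …, c_p))) on words c with independent letter sets. For each independent set I, let ψ(I) = Σ_{c : V(c) = I} ψ(c) (assumed finite). Then ψ satisfies the recursion ψ(I) · (α(E(I)) − α(I)) = Σ_{i ∈ I} α_i · ψ(I \ {i}), with ψ(∅) = 1, provided α(I) < α(E(I)). -/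
open Finset

/-- The product-form measure; lists store the newest item first, so that the list
`c_n :: ⋯ :: c_1 :: []` represents the state `(c_1, …, c_n)`. -/
noncomputable def piMeas {V : Type*} [Fintype V] [DecidableEq V] (G : SimpleGraph V)
    [DecidableRel G.Adj] (α : V → ℝ) : List V → ℝ
  | [] => 1
  | i :: c => piMeas G α c * (α i / ∑ j ∈ nbhd G ((i :: c).toFinset), α j)

/-!
Split the words with letter set `I` according to their newest letter `i`: removing it leaves a
word whose letter set is `I` (if `i` occurs again) or `I \ {i}` (if not). In both cases the factor
removed from `ψ` is `α i / α(E(I))`, so `ψ(I) = ∑_{i ∈ I} (ψ(I) + ψ(I \ {i})) α_i / α(E(I))`,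
which rearranges to the recursion once `α(E(I)) ≠ 0`.
-/

section Words

variable {V : Type*} [DecidableEq V]

def consWord (I : Finset V) :
    (Σ i : I, {c : List V // c.toFinset = I} ⊕ {c : List V // c.toFinset = I.erase i}) →
      {c : List V // c.toFinset = I}
  | ⟨i, .inl c⟩ => ⟨i :: c.1, by simp [c.2, insert_eq_self.2 i.2]⟩
  | ⟨i, .inr c⟩ => ⟨i :: c.1, by simp [c.2, insert_erase i.2]⟩

theorem consWord_injective (I : Finset V) : Function.Injective (consWord I) := by
  rintro ⟨⟨i, hi⟩, ⟨c, hc⟩ | ⟨c, hc⟩⟩ ⟨⟨j, hj⟩, ⟨d, hd⟩ | ⟨d, hd⟩⟩ h <;>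
    obtain ⟨rfl, rfl⟩ : i = j ∧ c = d := by simpa [consWord] using h
  · rfl
  · rw [hc] at hd
    exact absurd (hd ▸ hi) (notMem_erase i I)
  · rw [hd] at hc
    exact absurd (hc ▸ hi) (notMem_erase i I)
  · rfl

theorem consWord_surjective {I : Finset V} (hI : I.Nonempty) :
    Function.Surjective (consWord I) := by
  rintro ⟨_ | ⟨a, t⟩, rfl⟩
  · exact absurd rfl hI.ne_empty
  have ha : a ∈ (a :: t).toFinset := List.mem_toFinset.2 List.mem_cons_self
  by_cases hat : a ∈ t.toFinset
  · exact ⟨⟨⟨a, ha⟩, .inl ⟨t, by rw [List.toFinset_cons, insert_eq_self.2 hat]⟩⟩, rfl⟩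
  · exact ⟨⟨⟨a, ha⟩, .inr ⟨t, by simpa using (erase_insert hat).symm⟩⟩, rfl⟩

noncomputable def consWordEquiv {I : Finset V} (hI : I.Nonempty) :
    (Σ i : I, {c : List V // c.toFinset = I} ⊕ {c : List V // c.toFinset = I.erase i}) ≃
      {c : List V // c.toFinset = I} :=
  Equiv.ofBijective _ ⟨consWord_injective I, consWord_surjective hI⟩

theorem tsum_toFinset_eq_sum_cons {E : Type*} [NormedAddCommGroup E] [CompleteSpace E]
    (f : List V → E) {I : Finset V} (hI : I.Nonempty)
    (hf : Summable fun c : {c : List V // c.toFinset = I} => f c.1) :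
    ∑' c : {c : List V // c.toFinset = I}, f c.1 =
      ∑ i ∈ I, ((∑' c : {c : List V // c.toFinset = I}, f (i :: c.1)) +
        ∑' c : {c : List V // c.toFinset = I.erase i}, f (i :: c.1)) := by
  have hs := (consWordEquiv hI).summable_iff.2 hf
  rw [← (consWordEquiv hI).tsum_eq]
  refine hs.tsum_sigma.trans ?_
  rw [tsum_fintype, ← sum_coe_sort I]
  refine sum_congr rfl fun i _ => ?_
  have hi := hs.sigma_factor i
  exact Summable.tsum_sum (hi.comp_injective Sum.inl_injective)
    (hi.comp_injective Sum.inr_injective)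

end Words

section WordMeasure

variable {V : Type*} [Fintype V] [DecidableEq V] (G : SimpleGraph V) [DecidableRel G.Adj]
  (α : V → ℝ)

noncomputable def wordMeas (I : Finset V) : ℝ :=
  ∑' c : {c : List V // c.toFinset = I}, piMeas G α c.1

theorem piMeas_cons_of_toFinset_eq {i : V} {c : List V} {I : Finset V}
    (h : (i :: c).toFinset = I) :
    piMeas G α (i :: c) = piMeas G α c * (α i / ∑ j ∈ nbhd G I, α j) := by
  rw [piMeas, h]

theorem wordMeas_eq_sum {I : Finset V} (hI : I.Nonempty)
    (hsum : Summable fun c : {c : List V // c.toFinset = I} => piMeas G α c.1) :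
    wordMeas G α I = ∑ i ∈ I,
      (wordMeas G α I + wordMeas G α (I.erase i)) * (α i / ∑ j ∈ nbhd G I, α j) := by
  conv_lhs => rw [wordMeas, tsum_toFinset_eq_sum_cons _ hI hsum]
  refine sum_congr rfl fun i hi => ?_
  rw [wordMeas, wordMeas, add_mul, ← tsum_mul_right, ← tsum_mul_right]
  congr 1 <;> refine tsum_congr fun c => piMeas_cons_of_toFinset_eq G α ?_
  · simp [c.2, insert_eq_self.2 hi]
  · simp [c.2, insert_erase hi]

end WordMeasure

theorem stmt9_general {V : Type*} [Fintype V] [DecidableEq V] (G : SimpleGraph V) [DecidableRel G.Adj]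
    (α : V → ℝ) (hα : ∀ i, 0 < α i)
    (I : Finset V) (hne : I.Nonempty)
    (hstab : ∑ i ∈ I, α i < ∑ j ∈ nbhd G I, α j)
    (hsum : ∀ J ⊆ I, Summable (fun c : {c : List V // c.toFinset = J} => piMeas G α c.1)) :
    (∑' c : {c : List V // c.toFinset = I}, piMeas G α c.1)
        * ((∑ j ∈ nbhd G I, α j) - ∑ i ∈ I, α i)
      = ∑ i ∈ I, α i * ∑' c : {c : List V // c.toFinset = I.erase i}, piMeas G α c.1 := by
  change wordMeas G α I * _ = ∑ i ∈ I, α i * wordMeas G α (I.erase i)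
  have hrec := wordMeas_eq_sum G α hne (hsum I subset_rfl)
  set S := ∑ j ∈ nbhd G I, α j
  have hS : S ≠ 0 := ((sum_pos (fun i _ => hα i) hne).trans hstab).ne'
  have hmul : wordMeas G α I * S =
      (∑ i ∈ I, α i) * wordMeas G α I + ∑ i ∈ I, α i * wordMeas G α (I.erase i) := by
    rw [sum_mul, ← sum_add_distrib]
    conv_lhs => rw [hrec]
    rw [sum_mul]
    refine sum_congr rfl fun i _ => ?_
    field_simp
  linear_combination hmul

/-- The aggregated measure `ψ(I) = Σ_{c : V(c) = I} ψ(c)` satisfies the recursion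
`ψ(I) (α(E(I)) − α(I)) = Σ_{i ∈ I} α_i ψ(I \ {i})` when `α(I) < α(E(I))`. -/
theorem stmt9 {V : Type*} [Fintype V] [DecidableEq V] (G : SimpleGraph V) [DecidableRel G.Adj]
    (α : V → ℝ) (hα : ∀ i, 0 < α i)
    (I : Finset V) (hne : I.Nonempty) (hind : IsIndep G I)
    (hstab : ∑ i ∈ I, α i < ∑ j ∈ nbhd G I, α j)
    (hsum : ∀ J ⊆ I, Summable (fun c : {c : List V // c.toFinset = J} => piMeas G α c.1)) :
    (∑' c : {c : List V // c.toFinset = I}, piMeas G α c.1)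
        * ((∑ j ∈ nbhd G I, α j) - ∑ i ∈ I, α i)
      = ∑ i ∈ I, α i * ∑' c : {c : List V // c.toFinset = I.erase i}, piMeas G α c.1 :=
  stmt9_general G α hα I hne hstab hsum
end

section
/- Let Ind denote the finite set of nonempty independent sets of a simple graph G = (V, E), and let α : V → ℝ_{>0} satisfy α(I) < α(E(I)) for all I ∈ Ind. Define ψ(∅) = 1 and ψ(I) = (Σ_{i ∈ I} α_i ψ(I \ {i})) / (α(E(I)) − α(I)) recursively over independent sets. Then ψ(I) > 0 for every independent set I, and the normalized values π(I) = ψ(I) / Σ_{J} ψ(J) define a probability distribution on Ind ∪ {∅}. -/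
open Finset

/-- `ψ(∅) = 1` and `ψ(I) = (Σ_{i ∈ I} α_i ψ(I \ {i})) / (α(E(I)) − α(I))`. -/
noncomputable def psiRec {V : Type*} [Fintype V] [DecidableEq V] (G : SimpleGraph V)
    [DecidableRel G.Adj] (α : V → ℝ) (I : Finset V) : ℝ :=
  if I = ∅ then 1
  else (∑ i ∈ I.attach, α i.1 * psiRec G α (I.erase i.1)) /
    ((∑ j ∈ nbhd G I, α j) - ∑ i ∈ I, α i)
termination_by I.card
decreasing_by exact Finset.card_erase_lt_of_mem i.2

section

variable {V : Type*} {G : SimpleGraph V}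

theorem isIndep_empty : IsIndep G ∅ := by
  simp [IsIndep]

theorem IsIndep.mono {I J : Finset V} (hJ : IsIndep G J) (hIJ : I ⊆ J) : IsIndep G I :=
  fun i hi j hj => hJ i (hIJ hi) j (hIJ hj)

end

section

variable {V : Type*} [Fintype V] [DecidableEq V] (G : SimpleGraph V) [DecidableRel G.Adj]
  (α : V → ℝ)

theorem psiRec_of_ne_empty {I : Finset V} (hI : I ≠ ∅) :
    psiRec G α I = (∑ i ∈ I, α i * psiRec G α (I.erase i)) /
      ((∑ j ∈ nbhd G I, α j) - ∑ i ∈ I, α i) := by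
  rw [psiRec, if_neg hI, sum_attach I fun i => α i * psiRec G α (I.erase i)]

theorem psiRec_pos (hα : ∀ i, 0 < α i)
    (hstab : ∀ I : Finset V, I.Nonempty → IsIndep G I →
      ∑ i ∈ I, α i < ∑ j ∈ nbhd G I, α j)
    (I : Finset V) (hI : IsIndep G I) : 0 < psiRec G α I := by
  induction I using Finset.strongInduction with
  | H I ih =>
    rcases I.eq_empty_or_nonempty with rfl | hne
    · simp [psiRec]
    rw [psiRec_of_ne_empty G α hne.ne_empty]
    have hnum : 0 < ∑ i ∈ I, α i * psiRec G α (I.erase i) :=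
      sum_pos (fun i hi => mul_pos (hα i)
        (ih _ (erase_ssubset hi) (hI.mono (erase_subset i I)))) hne
    exact div_pos hnum (sub_pos.2 (hstab I hne hI))

end

/-- Under the stability condition, `ψ(I) > 0` for every independent set `I`, and the
normalized values `π(I) = ψ(I)/Σ_J ψ(J)` form a probability distribution on the
independent sets together with `∅`. -/
theorem stmt10 {V : Type*} [Fintype V] [DecidableEq V] (G : SimpleGraph V) [DecidableRel G.Adj]
    [DecidablePred (IsIndep G)]
    (α : V → ℝ) (hα : ∀ i, 0 < α i)
    (hstab : ∀ I : Finset V, I.Nonempty → IsIndep G I →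
      ∑ i ∈ I, α i < ∑ j ∈ nbhd G I, α j)
    (S : Finset (Finset V))
    (hS : S = (Finset.univ : Finset (Finset V)).filter (fun I => I = ∅ ∨ IsIndep G I))
    (π : Finset V → ℝ) (hπ : ∀ I, π I = psiRec G α I / ∑ J ∈ S, psiRec G α J) :
    (∀ I : Finset V, IsIndep G I → 0 < psiRec G α I) ∧
    (∀ I ∈ S, 0 ≤ π I) ∧ ∑ I ∈ S, π I = 1 := by
  have hpos := psiRec_pos G α hα hstab
  have hS_indep : ∀ I ∈ S, IsIndep G I := by
    intro I hI
    rw [hS, mem_filter] at hI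
    rcases hI.2 with rfl | h
    · exact isIndep_empty
    · exact h
  have hZ : 0 < ∑ J ∈ S, psiRec G α J :=
    sum_pos (fun J hJ => hpos J (hS_indep J hJ)) ⟨∅, by simp [hS]⟩
  refine ⟨hpos, fun I hI => ?_, ?_⟩
  · rw [hπ]
    exact (div_pos (hpos I (hS_indep I hI)) hZ).le
  · simp only [hπ]
    rw [← sum_div, div_self hZ.ne']
end
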